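/- arXiv:2204.07093 — 6 statements merged into one kernel-verified Lean document; each statement's English description precedes it below -/
import Mathlib

section
/- Let T : G → L(E) be a bounded strongly continuous group representation on a Banach space E such that every orbit {T_t v : t ∈ G} is relatively compact. Then the closure J(T) of {T_t : t ∈ G} in the strong operator topology is a compact topological group under composition. -/
/-!
Every `T t` is `C`-Lipschitz, hence so is every element of the pointwise closure `J`, and on a
family of `C`-Lipschitz maps composition is jointly continuous for pointwise convergence. By
Tychonoff, `J` is compact, lying in the product of the orbit closures. The pairs `(f, g) ∈ J × J`
with `f ∘ g = g ∘ f = id` then form a compact set whose first projection is closed and contains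
every `T t`, so all of `J` is invertible within `J`. That set of pairs is the graph of the inverse,
and a map into a compact set with closed graph is continuous.
-/

open Filter Topology Set Function
open scoped NNReal

theorem continuousOn_of_isClosed_graphOn {α β : Type*} [TopologicalSpace α] [TopologicalSpace β]
    {f : α → β} {s : Set α} {K : Set β} (hK : IsCompact K) (hf : MapsTo f s K)
    (hgraph : IsClosed (s.graphOn f)) : ContinuousOn f s := by
  intro x hx
  rw [ContinuousWithinAt, tendsto_iff_ultrafilter]
  intro u hu
  have hsu : s ∈ u := hu self_mem_nhdsWithin
  obtain ⟨y, -, hy⟩ := hK.ultrafilter_le_nhds (u.map f) (le_principal_iff.2 (mem_map.2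
    (mem_of_superset hsu hf)))
  have hux : Tendsto id (u : Filter α) (𝓝 x) := hu.trans nhdsWithin_le_nhds
  have hpair : Tendsto (fun z => (z, f z)) u (𝓝 (x, y)) := hux.prodMk_nhds hy
  have hxy : (x, y) ∈ s.graphOn f :=
    hgraph.mem_of_tendsto hpair (mem_of_superset hsu fun z hz => mem_graphOn.2 ⟨hz, rfl⟩)
  rw [(mem_graphOn.1 hxy).2]
  exact hy

theorem continuousOn_comp_of_lipschitzWith {α β γ : Type*} [PseudoMetricSpace β]
    [PseudoMetricSpace γ] (K : ℝ≥0) :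
    ContinuousOn (fun p : (β → γ) × (α → β) => p.1 ∘ p.2) {p | LipschitzWith K p.1} := by
  rintro ⟨f, g⟩ -
  refine continuousWithinAt_pi.2 fun v => ?_
  have hsnd : Tendsto (fun q : (β → γ) × (α → β) => dist (q.2 v) (g v))
      (𝓝[{p | LipschitzWith K p.1}] (f, g)) (𝓝 0) :=
    tendsto_iff_dist_tendsto_zero.1 ((continuous_apply v).comp continuous_snd).continuousWithinAt
  have hfst : Tendsto (fun q : (β → γ) × (α → β) => dist (q.1 (g v)) (f (g v)))
      (𝓝[{p | LipschitzWith K p.1}] (f, g)) (𝓝 0) :=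
    tendsto_iff_dist_tendsto_zero.1
      ((continuous_apply (g v)).comp continuous_fst).continuousWithinAt
  rw [ContinuousWithinAt, tendsto_iff_dist_tendsto_zero]
  refine squeeze_zero' (Eventually.of_forall fun _ => dist_nonneg) ?_
    (by simpa using (hsnd.const_mul (K : ℝ)).add hfst)
  filter_upwards [self_mem_nhdsWithin] with q (hq : LipschitzWith K q.1)
  calc dist (q.1 (q.2 v)) (f (g v))
      ≤ dist (q.1 (q.2 v)) (q.1 (g v)) + dist (q.1 (g v)) (f (g v)) := dist_triangle _ _ _
    _ ≤ K * dist (q.2 v) (g v) + dist (q.1 (g v)) (f (g v)) := by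
      gcongr; exact hq.dist_le_mul _ _

theorem isCompact_closure_range_of_isCompact_closure_eval {ι α β : Type*} [TopologicalSpace β]
    {F : ι → α → β} (hF : ∀ a, IsCompact (closure (range fun i => F i a))) :
    IsCompact (closure (range F)) := by
  refine (isCompact_univ_pi hF).of_isClosed_subset isClosed_closure
    (closure_minimal ?_ (isClosed_set_pi fun a _ => isClosed_closure))
  rintro _ ⟨i, rfl⟩ a -
  exact subset_closure ⟨i, rfl⟩

section InversePairs

variable {X : Type*} {J : Set (X → X)}

def inversePairs (J : Set (X → X)) : Set ((X → X) × (X → X)) :=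
  {p | p ∈ J ×ˢ J ∧ p.1 ∘ p.2 = id ∧ p.2 ∘ p.1 = id}

theorem invFun_eq_of_mem_inversePairs [Nonempty X] {f g : X → X}
    (hp : (f, g) ∈ inversePairs J) : invFun f = g := by
  have hleft : LeftInverse g f := congrFun hp.2.2
  exact (leftInverse_invFun hleft.injective).eq_rightInverse (congrFun hp.2.1)

theorem mem_inversePairs_invFun [Nonempty X] {f g : X → X} (hp : (f, g) ∈ inversePairs J) :
    (f, invFun f) ∈ inversePairs J :=
  invFun_eq_of_mem_inversePairs hp ▸ hp

theorem inversePairs_eq_graphOn_invFun [Nonempty X]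
    (hJ : ∀ f ∈ J, ∃ g, (f, g) ∈ inversePairs J) : inversePairs J = J.graphOn invFun := by
  ext ⟨f, g⟩
  rw [mem_graphOn]
  refine ⟨fun hp => ⟨hp.1.1, invFun_eq_of_mem_inversePairs hp⟩, ?_⟩
  rintro ⟨hf, hg : invFun f = g⟩
  obtain ⟨g', hg'⟩ := hJ f hf
  exact hg ▸ mem_inversePairs_invFun hg'

end InversePairs

section PointwiseTopology

variable {X : Type*} [TopologicalSpace X] {S J : Set (X → X)}

theorem comp_mem_closure_of_continuousOn_comp
    (hcomp : ContinuousOn (fun p : (X → X) × (X → X) => p.1 ∘ p.2) (closure S ×ˢ closure S))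
    (hS : ∀ f ∈ S, ∀ g ∈ S, f ∘ g ∈ S) {f g : X → X} (hf : f ∈ closure S) (hg : g ∈ closure S) :
    f ∘ g ∈ closure S := by
  rw [← closure_prod_eq] at hcomp
  have hfg : (f, g) ∈ closure (S ×ˢ S) := by rw [closure_prod_eq]; exact ⟨hf, hg⟩
  refine closure_mono ?_ (hcomp.image_closure (mem_image_of_mem _ hfg))
  rintro _ ⟨p, ⟨hp₁, hp₂⟩, rfl⟩
  exact hS _ hp₁ _ hp₂

theorem isClosed_inversePairs [T2Space X] (hJ : IsClosed J)
    (hcomp : ContinuousOn (fun p : (X → X) × (X → X) => p.1 ∘ p.2) (J ×ˢ J)) :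
    IsClosed (inversePairs J) := by
  have hright := hcomp.preimage_isClosed_of_isClosed (hJ.prod hJ) (isClosed_singleton (x := id))
  have hleft := (hcomp.comp continuous_swap.continuousOn fun p hp => ⟨hp.2, hp.1⟩
    ).preimage_isClosed_of_isClosed (hJ.prod hJ) (isClosed_singleton (x := id))
  convert hright.inter hleft using 1
  ext p
  simp only [inversePairs, mem_ofPred_eq, mem_inter_iff, mem_preimage, mem_singleton_iff,
    comp_apply, Prod.fst_swap, Prod.snd_swap]
  tauto

theorem exists_mem_inversePairs_closure [T2Space X] (hcpt : IsCompact (closure S))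
    (hcomp : ContinuousOn (fun p : (X → X) × (X → X) => p.1 ∘ p.2) (closure S ×ˢ closure S))
    (hS : ∀ f ∈ S, ∃ g ∈ S, f ∘ g = id ∧ g ∘ f = id) {f : X → X} (hf : f ∈ closure S) :
    ∃ g, (f, g) ∈ inversePairs (closure S) := by
  have hpairs : IsCompact (inversePairs (closure S)) :=
    (hcpt.prod hcpt).of_isClosed_subset (isClosed_inversePairs isClosed_closure hcomp)
      fun _ hp => hp.1
  have hsub : closure S ⊆ Prod.fst '' inversePairs (closure S) := by
    refine closure_minimal (fun f hf => ?_) (hpairs.image continuous_fst).isClosed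
    obtain ⟨g, hg, hfg, hgf⟩ := hS f hf
    exact ⟨(f, g), ⟨⟨subset_closure hf, subset_closure hg⟩, hfg, hgf⟩, rfl⟩
  obtain ⟨⟨_, g⟩, hp, rfl⟩ := hsub hf
  exact ⟨g, hp⟩

theorem continuousOn_invFun [T2Space X] [Nonempty X] (hJ : IsCompact J)
    (hcomp : ContinuousOn (fun p : (X → X) × (X → X) => p.1 ∘ p.2) (J ×ˢ J))
    (hinv : ∀ f ∈ J, ∃ g, (f, g) ∈ inversePairs J) : ContinuousOn invFun J := by
  refine continuousOn_of_isClosed_graphOn hJ (fun f hf => ?_) ?_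
  · obtain ⟨g, hg⟩ := hinv f hf
    exact (mem_inversePairs_invFun hg).1.2
  · rw [← inversePairs_eq_graphOn_invFun hinv]
    exact isClosed_inversePairs hJ.isClosed hcomp

end PointwiseTopology

theorem stmt_1_general {G E : Type*} [Group G]
    [NormedAddCommGroup E] [NormedSpace ℂ E]
    (T : G →* (E →L[ℂ] E))
    (hbdd : ∃ C : ℝ, ∀ t : G, ‖T t‖ ≤ C)
    (horb : ∀ v : E, IsCompact (closure (Set.range fun t : G => T t v)))
    (J : Set (E → E)) (hJ : J = closure (Set.range fun t : G => ⇑(T t))) :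
    IsCompact J ∧ (id ∈ J) ∧ (∀ f ∈ J, ∀ g ∈ J, f ∘ g ∈ J) ∧
    (∃ inv : (E → E) → (E → E),
      (∀ f ∈ J, inv f ∈ J ∧ f ∘ inv f = id ∧ inv f ∘ f = id) ∧ ContinuousOn inv J) ∧
    ContinuousOn (fun p : (E → E) × (E → E) => p.1 ∘ p.2) (J ×ˢ J) := by
  obtain ⟨C, hC⟩ := hbdd
  have hT_mul : ∀ s t, ⇑(T s) ∘ ⇑(T t) = ⇑(T (s * t)) := fun s t => by
    rw [map_mul, FunLike.coe_mul_eq_comp]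
  have hlip : ∀ t, LipschitzWith C.toNNReal (T t) := fun t =>
    ContinuousLinearMap.lipschitzWith_of_opNorm_le ((hC t).trans (Real.le_coe_toNNReal C))
  have hJlip : J ⊆ {f | LipschitzWith C.toNNReal f} :=
    hJ ▸ closure_minimal (range_subset_iff.2 hlip) (isClosed_setOfPred_lipschitzWith _)
  have hcomp : ContinuousOn (fun p : (E → E) × (E → E) => p.1 ∘ p.2) (J ×ˢ J) :=
    (continuousOn_comp_of_lipschitzWith _).mono fun p hp => hJlip hp.1
  have hJc : IsCompact J := hJ ▸ isCompact_closure_range_of_isCompact_closure_eval horb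
  have hinv : ∀ f ∈ J, ∃ g, (f, g) ∈ inversePairs J := by
    subst hJ
    refine fun f hf => exists_mem_inversePairs_closure hJc hcomp ?_ hf
    rintro _ ⟨t, rfl⟩
    refine ⟨_, ⟨t⁻¹, rfl⟩, ?_, ?_⟩ <;>
      simp only [hT_mul, mul_inv_cancel, inv_mul_cancel, map_one, FunLike.coe_one_eq_id]
  refine ⟨hJc, ?_, ?_, ⟨invFun, fun f hf => ?_, continuousOn_invFun hJc hcomp hinv⟩, hcomp⟩
  · exact hJ ▸ subset_closure ⟨1, by simp only [map_one, FunLike.coe_one_eq_id]⟩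
  · subst hJ
    refine fun f hf g hg => comp_mem_closure_of_continuousOn_comp hcomp ?_ hf hg
    rintro _ ⟨s, rfl⟩ _ ⟨t, rfl⟩
    exact ⟨s * t, (hT_mul s t).symm⟩
  · obtain ⟨g, hg⟩ := hinv f hf
    obtain ⟨⟨-, hmem⟩, hright, hleft⟩ := mem_inversePairs_invFun hg
    exact ⟨hmem, hright, hleft⟩

/-- If a bounded strongly continuous group representation has relatively compact orbits,
then the closure of `{T_t : t ∈ G}` in the strong operator topology (realized as the
topology of pointwise convergence on `E → E`) is a compact topological group under
composition. -/
theorem stmt_1 {G E : Type*} [Group G] [TopologicalSpace G] [IsTopologicalGroup G]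
    [NormedAddCommGroup E] [NormedSpace ℂ E] [CompleteSpace E]
    (T : G →* (E →L[ℂ] E))
    (hbdd : ∃ C : ℝ, ∀ t : G, ‖T t‖ ≤ C)
    (hcont : ∀ v : E, Continuous fun t : G => T t v)
    (horb : ∀ v : E, IsCompact (closure (Set.range fun t : G => T t v)))
    (J : Set (E → E)) (hJ : J = closure (Set.range fun t : G => ⇑(T t))) :
    IsCompact J ∧ (id ∈ J) ∧ (∀ f ∈ J, ∀ g ∈ J, f ∘ g ∈ J) ∧
    (∃ inv : (E → E) → (E → E),
      (∀ f ∈ J, inv f ∈ J ∧ f ∘ inv f = id ∧ inv f ∘ f = id) ∧ ContinuousOn inv J) ∧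
    ContinuousOn (fun p : (E → E) × (E → E) => p.1 ∘ p.2) (J ×ˢ J) :=
  stmt_1_general T hbdd horb J hJ
end

section
/- Let (K,φ) be a minimal topological dynamical system whose uniform enveloping semigroup H = E_u(K,φ) is a compact topological group with Haar probability measure m. Then the measure μ on K defined by μ(f) = ∫_H f(ϑ(x)) dm(ϑ) for f ∈ C(K) is an invariant probability measure which does not depend on the choice of x ∈ K, and it is the unique G-invariant regular Borel probability measure on K. -/
/-!
Minimality forces the compact group `H` to act transitively on `K`: every orbit of `H` is
compact, hence closed, and contains a dense `G`-orbit. Transitivity together with the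
bi-invariance of Haar measure on a compact group makes `∫_H f(ϑ • x) dm` independent of `x`
and invariant, and it is the integral against the push-forward of `m` to the orbit of `x`.
For uniqueness, an invariant measure `ν` satisfies `∫ f(ϑ • z) dν(z) = ∫ f dν` first for
`ϑ` in the dense image of `G` and then, by continuity in `ϑ`, for all `ϑ ∈ H`; averaging
over `ϑ` with respect to `m` and applying Fubini gives `∫ f dν = ∫_H f(ϑ • x) dm`.
-/

open Set

section Transitivity

variable {H K : Type*} [Group H] [TopologicalSpace H] [CompactSpace H]
  [TopologicalSpace K] [T2Space K] [MulAction H K] [ContinuousSMul H K]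

theorem MulAction.orbit_eq_univ_of_dense {x : K} (hx : Dense (orbit H x)) :
    orbit H x = univ := by
  have hclosed : IsClosed (orbit H x) :=
    (isCompact_range (continuous_id.smul continuous_const)).isClosed
  rw [← hclosed.closure_eq, hx.closure_eq]

theorem MulAction.isPretransitive_of_dense_orbit (h : ∀ x : K, Dense (orbit H x)) :
    IsPretransitive H K where
  exists_smul_eq x y := mem_orbit_iff.mp <| (orbit_eq_univ_of_dense (h x)).symm ▸ mem_univ y

end Transitivity

namespace MeasureTheory

section HaarAverage

variable {H K E : Type*} [Group H] [MeasurableSpace H] [MulAction H K]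
  [NormedAddCommGroup E] [NormedSpace ℝ E]

theorem Measure.isMulRightInvariant_of_compactSpace [TopologicalSpace H] [IsTopologicalGroup H]
    [CompactSpace H] [BorelSpace H] (m : Measure H) [m.IsHaarMeasure] [IsProbabilityMeasure m] :
    m.IsMulRightInvariant where
  map_mul_right_eq_self g := by
    have : IsProbabilityMeasure (m.map (· * g)) :=
      isProbabilityMeasure_map (measurable_mul_const g).aemeasurable
    have h := isMulInvariant_eq_smul_of_compactSpace (m.map (· * g)) m
    have hc : haarScalarFactor (m.map (· * g)) m = 1 := by
      have hu := congrArg (· univ) h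
      simp only [measure_univ, Measure.smul_apply, ENNReal.smul_def, smul_eq_mul, mul_one] at hu
      exact_mod_cast hu.symm
    rw [h, hc, one_smul]

theorem integral_smul_eq_of_isPretransitive [MeasurableMul H] [MulAction.IsPretransitive H K]
    (m : Measure H) [m.IsMulRightInvariant] (f : K → E) (x y : K) :
    ∫ ϑ, f (ϑ • x) ∂m = ∫ ϑ, f (ϑ • y) ∂m := by
  obtain ⟨η, rfl⟩ := MulAction.exists_smul_eq H x y
  simp_rw [smul_smul]
  exact (integral_mul_right_eq_self (fun ϑ => f (ϑ • x)) η).symm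

theorem integral_smul_smul_eq [MeasurableMul H] (m : Measure H) [m.IsMulLeftInvariant]
    (f : K → E) (x : K) (g : H) :
    ∫ ϑ, f (g • ϑ • x) ∂m = ∫ ϑ, f (ϑ • x) ∂m := by
  simp_rw [smul_smul]
  exact integral_mul_left_eq_self (fun ϑ => f (ϑ • x)) g

variable [TopologicalSpace H] [IsTopologicalGroup H] [BorelSpace H]
  [TopologicalSpace K] [MeasurableSpace K] [BorelSpace K] [ContinuousSMul H K]

theorem map_smul_map_smul_eq_self (m : Measure H) [m.IsMulLeftInvariant] (x : K) (g : H) :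
    (m.map (· • x)).map (g • ·) = m.map (· • x) := by
  have hx : Continuous fun ϑ : H => ϑ • x := continuous_id.smul continuous_const
  rw [Measure.map_map (continuous_const_smul g).measurable hx.measurable]
  conv_rhs => rw [← map_mul_left_eq_self m g]
  rw [Measure.map_map hx.measurable (measurable_const_mul g)]
  simp only [Function.comp_def, smul_smul]

theorem regular_map_smul [CompactSpace H] [T2Space K] (m : Measure H) [m.IsHaarMeasure]
    (x : K) : (m.map (· • x)).Regular := by
  have : (m.map (· • x)).InnerRegular :=
    Measure.InnerRegular.map_of_continuous (continuous_id.smul continuous_const)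
  infer_instance

end HaarAverage

section Uniqueness

variable {X K E : Type*} [TopologicalSpace K] [CompactSpace K] [MeasurableSpace K]
  [NormedAddCommGroup E] [NormedSpace ℝ E]

theorem continuous_integral_continuousMap [OpensMeasurableSpace K] (ν : Measure K)
    [IsFiniteMeasure ν] : Continuous fun g : C(K, E) => ∫ z, g z ∂ν := by
  refine (LipschitzWith.of_dist_le_mul (K := (ν.real univ).toNNReal) fun g₁ g₂ => ?_).continuous
  have hint (g : C(K, E)) : Integrable g ν :=
    g.continuous.integrable_of_hasCompactSupport (.of_compactSpace _)
  rw [dist_eq_norm, dist_eq_norm, ← integral_sub (hint g₁) (hint g₂),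
    Real.coe_toNNReal _ measureReal_nonneg, mul_comm]
  exact norm_integral_le_of_norm_le_const <| .of_forall fun z => (g₁ - g₂).norm_coe_le_norm z

theorem continuous_integral_of_continuous_uncurry [TopologicalSpace X] [OpensMeasurableSpace K]
    (ν : Measure K) [IsFiniteMeasure ν] {f : X → K → E} (hf : Continuous (Function.uncurry f)) :
    Continuous fun x => ∫ z, f x z ∂ν :=
  (continuous_integral_continuousMap ν).comp (ContinuousMap.curry ⟨_, hf⟩).continuous

variable {G H : Type*} [Group H] [TopologicalSpace H] [MulAction H K] [ContinuousSMul H K]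

theorem integral_smul_eq_of_denseRange [BorelSpace K] {ι : G → H} (hι : DenseRange ι)
    (ν : Measure K) [IsFiniteMeasure ν] (hν : ∀ t, ν.map (ι t • ·) = ν) (f : C(K, E)) (ϑ : H) :
    ∫ z, f (ϑ • z) ∂ν = ∫ z, f z ∂ν := by
  have hcont : Continuous fun ϑ : H => ∫ z, f (ϑ • z) ∂ν :=
    continuous_integral_of_continuous_uncurry ν (f.continuous.comp continuous_smul)
  refine congrFun (hι.equalizer hcont continuous_const (funext fun t => ?_)) ϑ
  change ∫ z, f (ι t • z) ∂ν = ∫ z, f z ∂ν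
  conv_rhs => rw [← hν t]
  exact (integral_map_equiv (MeasurableEquiv.smul (ι t)) f).symm

theorem integral_eq_integral_smul_of_forall_integral_smul_eq [CompleteSpace E] [CompactSpace H]
    [MeasurableSpace H] [OpensMeasurableSpace H] [OpensMeasurableSpace K] (m : Measure H)
    [IsProbabilityMeasure m] (ν : Measure K) [IsProbabilityMeasure ν] (f : C(K, E)) (x : K)
    (hν : ∀ ϑ : H, ∫ z, f (ϑ • z) ∂ν = ∫ z, f z ∂ν)
    (hm : ∀ z : K, ∫ ϑ, f (ϑ • z) ∂m = ∫ ϑ, f (ϑ • x) ∂m) :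
    ∫ z, f z ∂ν = ∫ ϑ, f (ϑ • x) ∂m :=
  calc ∫ z, f z ∂ν = ∫ ϑ, ∫ z, f (ϑ • z) ∂ν ∂m := by
        simp only [hν, integral_const, probReal_univ, one_smul]
    _ = ∫ z, ∫ ϑ, f (ϑ • z) ∂m ∂ν :=
      integral_integral_swap_of_hasCompactSupport (f := fun ϑ z => f (ϑ • z))
        (f.continuous.comp continuous_smul) (.of_compactSpace _)
    _ = ∫ ϑ, f (ϑ • x) ∂m := by simp only [hm, integral_const, probReal_univ, one_smul]

end Uniqueness

end MeasureTheory

open MeasureTheory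

theorem stmt_5_general {G H K : Type*} [Group G]
    [Group H] [TopologicalSpace H] [IsTopologicalGroup H] [CompactSpace H]
    [MeasurableSpace H] [BorelSpace H]
    [TopologicalSpace K] [CompactSpace K] [T2Space K]
    [MeasurableSpace K] [BorelSpace K]
    [MulAction H K] [ContinuousSMul H K]
    (ι : G →* H) (hdense : DenseRange ι)
    (hmin : ∀ x : K, Dense (Set.range fun t : G => ι t • x))
    (m : Measure H) [m.IsHaarMeasure] [IsProbabilityMeasure m] :
    (∀ x y : K, ∀ f : C(K, ℂ), ∫ ϑ, f (ϑ • x) ∂m = ∫ ϑ, f (ϑ • y) ∂m) ∧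
    (∀ x : K, ∀ t : G, ∀ f : C(K, ℂ), ∫ ϑ, f (ι t • ϑ • x) ∂m = ∫ ϑ, f (ϑ • x) ∂m) ∧
    (∀ x : K, ∃ μ : Measure K, IsProbabilityMeasure μ ∧ μ.Regular ∧
      (∀ t : G, Measure.map (fun z : K => ι t • z) μ = μ) ∧
      ∀ f : C(K, ℂ), ∫ z, f z ∂μ = ∫ ϑ, f (ϑ • x) ∂m) ∧
    (∀ ν : Measure K, IsProbabilityMeasure ν → ν.Regular →
      (∀ t : G, Measure.map (fun z : K => ι t • z) ν = ν) →
      ∀ x : K, ∀ f : C(K, ℂ), ∫ z, f z ∂ν = ∫ ϑ, f (ϑ • x) ∂m) := by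
  have : MulAction.IsPretransitive H K := MulAction.isPretransitive_of_dense_orbit fun x =>
    (hmin x).mono <| range_subset_iff.mpr fun t => MulAction.mem_orbit x (ι t)
  have : m.IsMulRightInvariant := Measure.isMulRightInvariant_of_compactSpace m
  have hx (x : K) : Continuous fun ϑ : H => ϑ • x := continuous_id.smul continuous_const
  refine ⟨fun x y f => integral_smul_eq_of_isPretransitive m f x y,
    fun x t f => integral_smul_smul_eq m f x (ι t), fun x => ?_, fun ν _ _ hν x f => ?_⟩
  · exact ⟨m.map (· • x), Measure.isProbabilityMeasure_map (hx x).aemeasurable,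
      regular_map_smul m x, fun t => map_smul_map_smul_eq_self m x (ι t),
      fun f => integral_map (hx x).aemeasurable f.continuous.aestronglyMeasurable⟩
  · exact integral_eq_integral_smul_of_forall_integral_smul_eq m ν f x
      (integral_smul_eq_of_denseRange hdense ν hν f)
      fun z => integral_smul_eq_of_isPretransitive m f z x

/-- For a minimal system whose uniform enveloping semigroup is a compact group `H` with Haar
probability measure `m`, the functional `f ↦ ∫_H f(ϑ•x) dm(ϑ)` is independent of `x`,
is given by a `G`-invariant regular Borel probability measure, and every `G`-invariant
regular Borel probability measure coincides with it. -/
theorem stmt_5 {G H K : Type*} [Group G] [TopologicalSpace G] [IsTopologicalGroup G]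
    [Group H] [TopologicalSpace H] [IsTopologicalGroup H] [CompactSpace H] [T2Space H]
    [MeasurableSpace H] [BorelSpace H]
    [TopologicalSpace K] [CompactSpace K] [T2Space K] [Nonempty K]
    [MeasurableSpace K] [BorelSpace K]
    [MulAction H K] [ContinuousSMul H K]
    (ι : G →* H) (hι : Continuous ι) (hdense : DenseRange ι)
    (hmin : ∀ x : K, Dense (Set.range fun t : G => ι t • x))
    (m : Measure H) [m.IsHaarMeasure] [IsProbabilityMeasure m] :
    (∀ x y : K, ∀ f : C(K, ℂ), ∫ ϑ, f (ϑ • x) ∂m = ∫ ϑ, f (ϑ • y) ∂m) ∧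
    (∀ x : K, ∀ t : G, ∀ f : C(K, ℂ), ∫ ϑ, f (ι t • ϑ • x) ∂m = ∫ ϑ, f (ϑ • x) ∂m) ∧
    (∀ x : K, ∃ μ : Measure K, IsProbabilityMeasure μ ∧ μ.Regular ∧
      (∀ t : G, Measure.map (fun z : K => ι t • z) μ = μ) ∧
      ∀ f : C(K, ℂ), ∫ z, f z ∂μ = ∫ ϑ, f (ϑ • x) ∂m) ∧
    (∀ ν : Measure K, IsProbabilityMeasure ν → ν.Regular →
      (∀ t : G, Measure.map (fun z : K => ι t • z) ν = ν) →
      ∀ x : K, ∀ f : C(K, ℂ), ∫ z, f z ∂ν = ∫ ϑ, f (ϑ • x) ∂m) :=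
  stmt_5_general ι hdense hmin m
end

section
/- Let (K,φ) be a topological dynamical system with discrete spectrum. Then (K,φ) is topologically ergodic (i.e., the fixed space of the Koopman representation on C(K) is one-dimensional) if and only if (K,φ) is minimal. -/
/-!
Minimal ⇒ ergodic: the level set of an invariant function through a point is closed, invariant
and nonempty. Ergodic ⇒ minimal: if a closed invariant set `M` contains `x` but misses `z`,
take `g` in a finite-dimensional invariant subspace `S` uniformly within `1/4` of an Urysohn
function for `M` and `{z}`. The orbit supremum `y ↦ ⨆ t, ‖g (φ t y)‖` is invariant, and it is
continuous because the orbit of `g` is a bounded subset of `S`, on which point evaluations depend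
continuously on the point (in operator norm) since `S` is finite-dimensional. By ergodicity it
is constant, yet it is at most `1/4` at `x` and at least `3/4` at `z`.
-/
open Set NNReal

lemma ContinuousLinearMap.lipschitzWith_iSup_norm_apply {𝕜 E F ι : Type*}
    [NontriviallyNormedField 𝕜] [SeminormedAddCommGroup E] [NormedSpace 𝕜 E]
    [SeminormedAddCommGroup F] [NormedSpace 𝕜 F] [Nonempty ι] {v : ι → E} {R : ℝ≥0}
    (hv : ∀ i, ‖v i‖ ≤ R) :
    LipschitzWith R fun L : E →L[𝕜] F => ⨆ i, ‖L (v i)‖ := by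
  have hbdd (L : E →L[𝕜] F) : BddAbove (range fun i => ‖L (v i)‖) :=
    ⟨‖L‖ * R, forall_mem_range.2 fun i => L.le_opNorm_of_le (hv i)⟩
  refine LipschitzWith.of_le_add_mul R fun L L' => ciSup_le fun i => ?_
  calc ‖L (v i)‖ ≤ ‖L' (v i)‖ + ‖(L - L') (v i)‖ := norm_le_norm_add_norm_sub' _ _
    _ ≤ (⨆ i, ‖L' (v i)‖) + R * dist L L' := by
      rw [dist_eq_norm, mul_comm]
      exact add_le_add (le_ciSup (hbdd L') i) ((L - L').le_opNorm_of_le (hv i))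

namespace Submodule

variable {K 𝕜 : Type*} [TopologicalSpace K] [CompactSpace K]
  [NontriviallyNormedField 𝕜] [CompleteSpace 𝕜] (S : Submodule 𝕜 C(K, 𝕜)) [FiniteDimensional 𝕜 S]

lemma continuous_evalCLM_comp_subtypeL :
    Continuous fun y : K => (ContinuousMap.evalCLM 𝕜 y).comp S.subtypeL :=
  continuous_clm_apply.2 fun v => (v : C(K, 𝕜)).continuous

lemma continuous_iSup_norm_apply {ι : Type*} [Nonempty ι] {v : ι → S} {R : ℝ≥0}
    (hv : ∀ i, ‖v i‖ ≤ R) : Continuous fun y : K => ⨆ i, ‖(v i : C(K, 𝕜)) y‖ :=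
  (ContinuousLinearMap.lipschitzWith_iSup_norm_apply hv).continuous.comp
    S.continuous_evalCLM_comp_subtypeL

end Submodule

section Koopman

variable {G K : Type*} [TopologicalSpace K] {φ : G → C(K, K)}

variable (φ) in
noncomputable def orbitSupNorm (g : C(K, ℂ)) (y : K) : ℝ := ⨆ t, ‖g (φ t y)‖

lemma orbitSupNorm_le [Nonempty G] {g : C(K, ℂ)} {y : K} {r : ℝ} (h : ∀ t, ‖g (φ t y)‖ ≤ r) :
    orbitSupNorm φ g y ≤ r :=
  ciSup_le h

lemma le_orbitSupNorm [CompactSpace K] (g : C(K, ℂ)) (y : K) (t : G) :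
    ‖g (φ t y)‖ ≤ orbitSupNorm φ g y :=
  le_ciSup (f := fun t => ‖g (φ t y)‖) ⟨‖g‖, forall_mem_range.2 fun _ => g.norm_coe_le_norm _⟩ t

lemma orbitSupNorm_map [Group G] (hmul : ∀ s t : G, φ (s * t) = (φ s).comp (φ t))
    (g : C(K, ℂ)) (s : G) (y : K) : orbitSupNorm φ g (φ s y) = orbitSupNorm φ g y := by
  have (t : G) : φ t (φ s y) = φ (t * s) y := by rw [hmul]; rfl
  simp_rw [orbitSupNorm, this]
  exact (mul_right_surjective s).iSup_comp fun t => ‖g (φ t y)‖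

lemma continuous_orbitSupNorm [Nonempty G] [CompactSpace K] {S : Submodule ℂ C(K, ℂ)}
    [FiniteDimensional ℂ S] (hS : ∀ t : G, ∀ f ∈ S, f.comp (φ t) ∈ S) {g : C(K, ℂ)}
    (hg : g ∈ S) : Continuous (orbitSupNorm φ g) :=
  S.continuous_iSup_norm_apply (v := fun t => ⟨g.comp (φ t), hS t g hg⟩) (R := ‖g‖₊)
    fun _ => (ContinuousMap.norm_le _ (norm_nonneg g)).2 fun _ => g.norm_coe_le_norm _

lemma apply_eq_apply_of_ergodic
    (herg : ∀ f : C(K, ℂ), (∀ t : G, f.comp (φ t) = f) → ∃ c : ℂ, f = ContinuousMap.const K c)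
    {F : K → ℝ} (hF : Continuous F) (hFinv : ∀ t y, F (φ t y) = F y) (x y : K) : F x = F y := by
  obtain ⟨c, hc⟩ := herg ⟨fun y => F y, Complex.continuous_ofReal.comp hF⟩
    fun t => ContinuousMap.ext fun y => congrArg Complex.ofReal (hFinv t y)
  have hcx := DFunLike.congr_fun hc x
  have hcy := DFunLike.congr_fun hc y
  simp only [ContinuousMap.coe_mk, ContinuousMap.const_apply] at hcx hcy
  exact_mod_cast hcx.trans hcy.symm

lemma eq_empty_or_eq_univ_of_ergodic [Group G] [CompactSpace K] [T2Space K]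
    (h1 : φ 1 = ContinuousMap.id K) (hmul : ∀ s t : G, φ (s * t) = (φ s).comp (φ t))
    (hds : Dense (⋃ S ∈ {S : Submodule ℂ C(K, ℂ) |
        FiniteDimensional ℂ S ∧ ∀ t : G, ∀ f ∈ S, f.comp (φ t) ∈ S}, (S : Set C(K, ℂ))))
    (herg : ∀ f : C(K, ℂ), (∀ t : G, f.comp (φ t) = f) → ∃ c : ℂ, f = ContinuousMap.const K c)
    {M : Set K} (hM : IsClosed M) (hMinv : ∀ t : G, ∀ y ∈ M, φ t y ∈ M) :
    M = ∅ ∨ M = univ := by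
  rw [or_iff_not_imp_left, ← ne_eq, ← nonempty_iff_ne_empty, eq_univ_iff_forall]
  rintro ⟨x, hx⟩ z
  by_contra hz
  obtain ⟨u, huM, huz, -⟩ := exists_continuous_zero_one_of_isClosed hM isClosed_singleton
    (disjoint_singleton_right.2 hz)
  let uℂ : C(K, ℂ) := ⟨fun y => u y, by fun_prop⟩
  obtain ⟨g, hg, hug⟩ := hds.exists_dist_lt uℂ (by norm_num : (0 : ℝ) < 1 / 4)
  obtain ⟨S, ⟨hSfin, hSinv⟩, hgS⟩ := mem_iUnion₂.1 hg
  have hdist (y : K) : ‖(u y : ℂ) - g y‖ < 1 / 4 := by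
    rw [← dist_eq_norm]
    exact (ContinuousMap.dist_apply_le_dist (f := uℂ) y).trans_lt hug
  have hx_small : orbitSupNorm φ g x ≤ 1 / 4 := orbitSupNorm_le fun t => by
    simpa [huM (hMinv t x hx)] using (hdist (φ t x)).le
  have hz_large : 3 / 4 ≤ orbitSupNorm φ g z := by
    have hgz : ‖1 - g z‖ < 1 / 4 := by simpa [huz rfl] using hdist z
    calc 3 / 4 ≤ ‖g z‖ := by linarith [norm_le_norm_add_norm_sub' (1 : ℂ) (g z), norm_one (α := ℂ)]
      _ = ‖g (φ 1 z)‖ := by rw [h1, ContinuousMap.id_apply]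
      _ ≤ orbitSupNorm φ g z := le_orbitSupNorm g z 1
  have := apply_eq_apply_of_ergodic herg (continuous_orbitSupNorm hSinv hgS)
    (orbitSupNorm_map hmul g) x z
  linarith

lemma exists_eq_const_of_minimal [Nonempty K]
    (hmin : ∀ M : Set K, IsClosed M → (∀ t : G, ∀ y ∈ M, φ t y ∈ M) → M = ∅ ∨ M = univ)
    {f : C(K, ℂ)} (hf : ∀ t : G, f.comp (φ t) = f) : ∃ c : ℂ, f = ContinuousMap.const K c := by
  obtain ⟨x⟩ := ‹Nonempty K›
  have hinv (t : G) (y : K) (hy : y ∈ f ⁻¹' {f x}) : φ t y ∈ f ⁻¹' {f x} :=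
    (DFunLike.congr_fun (hf t) y).trans hy
  have hlevel := (hmin _ (isClosed_singleton.preimage f.continuous) hinv).resolve_left
    (nonempty_iff_ne_empty.1 ⟨x, rfl⟩)
  exact ⟨f x, ContinuousMap.ext fun y => eq_univ_iff_forall.1 hlevel y⟩

end Koopman

theorem stmt_6_general {G K : Type*} [Group G]
    [TopologicalSpace K] [CompactSpace K] [T2Space K] [Nonempty K]
    (φ : G → C(K, K))
    (h1 : φ 1 = ContinuousMap.id K)
    (hmul : ∀ s t : G, φ (s * t) = (φ s).comp (φ t))
    (hds : Dense (⋃ S ∈ {S : Submodule ℂ C(K, ℂ) |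
        FiniteDimensional ℂ S ∧ ∀ t : G, ∀ f ∈ S, f.comp (φ t) ∈ S}, (S : Set C(K, ℂ)))) :
    (∀ f : C(K, ℂ), (∀ t : G, f.comp (φ t) = f) → ∃ c : ℂ, f = ContinuousMap.const K c) ↔
    (∀ M : Set K, IsClosed M → (∀ t : G, ∀ y ∈ M, φ t y ∈ M) → M = ∅ ∨ M = Set.univ) :=
  ⟨fun herg _ hM hMinv => eq_empty_or_eq_univ_of_ergodic h1 hmul hds herg hM hMinv,
    fun hmin _ hf => exists_eq_const_of_minimal hmin hf⟩

/-- For a topological dynamical system with discrete spectrum, topological ergodicity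
(the Koopman fixed space consists exactly of the constants) is equivalent to minimality
(the only closed invariant subsets are `∅` and `K`). -/
theorem stmt_6 {G K : Type*} [Group G] [TopologicalSpace G] [IsTopologicalGroup G]
    [TopologicalSpace K] [CompactSpace K] [T2Space K] [Nonempty K]
    (φ : G → C(K, K))
    (h1 : φ 1 = ContinuousMap.id K)
    (hmul : ∀ s t : G, φ (s * t) = (φ s).comp (φ t))
    (hjoint : Continuous fun p : G × K => φ p.1 p.2)
    (hds : Dense (⋃ S ∈ {S : Submodule ℂ C(K, ℂ) |
        FiniteDimensional ℂ S ∧ ∀ t : G, ∀ f ∈ S, f.comp (φ t) ∈ S}, (S : Set C(K, ℂ)))) :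
    (∀ f : C(K, ℂ), (∀ t : G, f.comp (φ t) = f) → ∃ c : ℂ, f = ContinuousMap.const K c) ↔
    (∀ M : Set K, IsClosed M → (∀ t : G, ∀ y ∈ M, φ t y ∈ M) → M = ∅ ∨ M = Set.univ) :=
  stmt_6_general φ h1 hmul hds
end

section
/- Let G be an abelian topological group and σ ⊆ G* a subgroup of its character group. Then σ coincides with the set of characters of G obtained by pulling back characters of the compactification σ* along the evaluation map, i.e., σ = {α ∘ c_σ : α ∈ (σ*)*}. -/
/-!
Pulling back along `c_σ` sends the evaluation character `φ ↦ φ a` of `σ*` to `a`, so the theorem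
is Pontryagin duality for the discrete group `σ`: every character of the compact group `σ*` is an
evaluation. The evaluations form a subgroup of characters separating the points of `σ*`, so by
Stone–Weierstrass their span is dense in `C(σ*, ℂ)`. A character outside this subgroup is
orthogonal in `L²` of Haar measure to all of them, hence to every continuous function and in
particular to itself, contradicting `⟪α, α⟫ = μ(σ*) > 0`.
-/

open MeasureTheory

namespace PontryaginDual

variable {K : Type*} [CommGroup K] [TopologicalSpace K]

@[simps]
noncomputable def toContinuousMap : PontryaginDual K →* C(K, ℂ) where
  toFun χ := ⟨fun x ↦ (χ x : ℂ), by fun_prop⟩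
  map_one' := by ext; simp
  map_mul' χ ψ := by ext x; exact Circle.coe_mul (χ x) (ψ x)

lemma star_toContinuousMap (χ : PontryaginDual K) :
    star (toContinuousMap χ) = toContinuousMap χ⁻¹ := by
  ext x; exact (Circle.coe_inv_eq_conj (χ x)).symm

theorem span_toContinuousMap_closure_eq_top [CompactSpace K] (S : Subgroup (PontryaginDual K))
    (hS : ∀ x y : K, x ≠ y → ∃ χ ∈ S, χ x ≠ χ y) :
    (Submodule.span ℂ (toContinuousMap '' (S : Set (PontryaginDual K)))).topologicalClosure =
      ⊤ := by
  set T := S.toSubmonoid.map toContinuousMap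
  have hT_star : star (T : Set C(K, ℂ)) ⊆ T := by
    rintro _ ⟨χ, hχ, hf⟩
    exact ⟨χ⁻¹, S.inv_mem hχ, by rw [← star_toContinuousMap, hf, star_star]⟩
  set B := StarAlgebra.adjoin ℂ (T : Set C(K, ℂ))
  have hB : Subalgebra.toSubmodule B.toSubalgebra = Submodule.span ℂ T := by
    rw [StarAlgebra.adjoin_eq_span, Set.union_eq_left.2 hT_star, Submonoid.closure_eq]
  have hB_sep : B.SeparatesPoints := by
    intro x y hxy
    obtain ⟨χ, hχ, hχxy⟩ := hS x y hxy
    exact ⟨_, ⟨_, StarAlgebra.subset_adjoin ℂ _ ⟨χ, hχ, rfl⟩, rfl⟩,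
      by simpa using fun h ↦ hχxy (Circle.coe_injective h)⟩
  change (Submodule.span ℂ (T : Set C(K, ℂ))).topologicalClosure = ⊤
  rw [← hB]
  exact congr_arg (Subalgebra.toSubmodule <| StarSubalgebra.toSubalgebra ·)
    (ContinuousMap.starSubalgebra_topologicalClosure_eq_top_of_separatesPoints B hB_sep)

section Integral

variable [MeasurableSpace K] (μ : Measure K)

theorem integral_eq_zero_of_ne_one [MeasurableMul K] [μ.IsMulLeftInvariant]
    {χ : PontryaginDual K} (hχ : χ ≠ 1) : ∫ x, (χ x : ℂ) ∂μ = 0 := by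
  obtain ⟨g, hg⟩ : ∃ g, χ g ≠ 1 := by
    by_contra! h
    exact hχ (ext h)
  have h := integral_mul_left_eq_self (μ := μ) (fun x ↦ (χ x : ℂ)) g
  simp only [_root_.map_mul, Circle.coe_mul, integral_const_mul] at h
  by_contra h_ne
  exact hg <| Circle.coe_injective <| (mul_eq_right₀ h_ne).1 h

variable [BorelSpace K] [CompactSpace K] [IsFiniteMeasure μ]

theorem inner_toLp_toContinuousMap_self (χ : PontryaginDual K) :
    inner ℂ (ContinuousMap.toLp 2 μ ℂ (toContinuousMap χ))
      (ContinuousMap.toLp 2 μ ℂ (toContinuousMap χ)) = μ.real Set.univ := by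
  rw [ContinuousMap.inner_toLp]
  simp [← Circle.coe_inv_eq_conj]

theorem inner_toLp_toContinuousMap_of_ne [MeasurableMul K] [μ.IsMulLeftInvariant]
    {χ ψ : PontryaginDual K} (h : χ ≠ ψ) :
    inner ℂ (ContinuousMap.toLp 2 μ ℂ (toContinuousMap χ))
      (ContinuousMap.toLp 2 μ ℂ (toContinuousMap ψ)) = 0 := by
  have : ψ * χ⁻¹ ≠ 1 := fun h' ↦ h (mul_inv_eq_one.1 h').symm
  rw [ContinuousMap.inner_toLp, ← integral_eq_zero_of_ne_one μ this]
  congr 1; ext x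
  exact (congrArg _ (Circle.coe_inv_eq_conj (χ x))).symm.trans (Circle.coe_mul _ _).symm

end Integral

theorem subgroup_eq_top_of_separatesPoints [IsTopologicalGroup K] [CompactSpace K]
    (S : Subgroup (PontryaginDual K)) (hS : ∀ x y : K, x ≠ y → ∃ χ ∈ S, χ x ≠ χ y) : S = ⊤ := by
  borelize K
  let μ : Measure K := Measure.haar
  refine (Subgroup.eq_top_iff' S).2 fun α ↦ by_contra fun hα ↦ ?_
  let f := ContinuousMap.toLp 2 μ ℂ (toContinuousMap α)
  let V : Submodule ℂ C(K, ℂ) :=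
    LinearMap.ker ((innerSL ℂ f).comp (ContinuousMap.toLp 2 μ ℂ) : C(K, ℂ) →ₗ[ℂ] ℂ)
  have hV_closed : IsClosed (V : Set C(K, ℂ)) := ContinuousLinearMap.isClosed_ker _
  have hV : Submodule.span ℂ (toContinuousMap '' (S : Set (PontryaginDual K))) ≤ V := by
    refine Submodule.span_le.2 ?_
    rintro _ ⟨χ, hχ, rfl⟩
    exact inner_toLp_toContinuousMap_of_ne μ (ne_of_mem_of_not_mem hχ hα).symm
  have hαV : toContinuousMap α ∈ V := by
    refine Submodule.topologicalClosure_minimal _ hV hV_closed ?_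
    rw [span_toContinuousMap_closure_eq_top S hS]
    trivial
  have h_self := inner_toLp_toContinuousMap_self μ α
  rw [show inner ℂ f f = 0 from hαV] at h_self
  exact (measureReal_univ_pos (μ := μ)).ne' (by exact_mod_cast h_self.symm)

variable {A : Type*} [CommGroup A] [TopologicalSpace A]

noncomputable def evalHom : A →* PontryaginDual (PontryaginDual A) where
  toFun a := ⟨⟨⟨fun χ ↦ χ a, rfl⟩, fun _ _ ↦ rfl⟩, continuous_eval_const (F := A →ₜ* Circle) a⟩
  map_one' := ext fun χ ↦ _root_.map_one χ
  map_mul' a b := ext fun χ ↦ _root_.map_mul χ a b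

theorem evalHom_surjective [DiscreteTopology A] :
    Function.Surjective (evalHom : A →* PontryaginDual (PontryaginDual A)) := by
  refine MonoidHom.range_eq_top.1 (subgroup_eq_top_of_separatesPoints _ fun φ ψ hφψ ↦ ?_)
  obtain ⟨a, ha⟩ := DFunLike.ne_iff.1 hφψ
  exact ⟨evalHom a, ⟨a, rfl⟩, ha⟩

end PontryaginDual

theorem stmt_12_general {G A : Type*} [CommGroup G] [TopologicalSpace G]
    [CommGroup A] [TopologicalSpace A] [DiscreteTopology A]
    (e : A →* PontryaginDual G)
    (c : ContinuousMonoidHom G (PontryaginDual A)) (hc : ∀ (t : G) (a : A), c t a = e a t) :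
    ∀ χ : PontryaginDual G,
      (∃ a : A, e a = χ) ↔ ∃ α : PontryaginDual (PontryaginDual A), χ = α.comp c := by
  have h_comp (a : A) : e a = (PontryaginDual.evalHom a).comp c :=
    PontryaginDual.ext fun t ↦ (hc t a).symm
  intro χ
  constructor
  · rintro ⟨a, rfl⟩
    exact ⟨PontryaginDual.evalHom a, h_comp a⟩
  · rintro ⟨α, rfl⟩
    obtain ⟨a, rfl⟩ := PontryaginDual.evalHom_surjective α
    exact ⟨a, h_comp a⟩

/-- A subgroup `σ` of the dual of an abelian topological group `G` (realized by a discrete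
abelian group `A` embedded via `e`) coincides with the set of characters of `G` obtained by
pulling back characters of the compactification `σ* = PontryaginDual A` along the
evaluation map `c_σ`. -/
theorem stmt_12 {G A : Type*} [CommGroup G] [TopologicalSpace G] [IsTopologicalGroup G]
    [CommGroup A] [TopologicalSpace A] [DiscreteTopology A] [IsTopologicalGroup A]
    (e : A →* PontryaginDual G) (he : Function.Injective e)
    (c : ContinuousMonoidHom G (PontryaginDual A)) (hc : ∀ (t : G) (a : A), c t a = e a t) :
    ∀ χ : PontryaginDual G,
      (∃ a : A, e a = χ) ↔ ∃ α : PontryaginDual (PontryaginDual A), χ = α.comp c :=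
  stmt_12_general e c hc
end

section
/- Let G be an abelian topological group and (K,φ) a minimal topological dynamical system with discrete spectrum, so that H = E_u(K,φ) is a compact abelian group acting transitively and effectively on K. Then for every z ∈ K the orbit map H → K, ϑ ↦ ϑ(z), is a homeomorphism (i.e., the transitive effective action of the compact abelian group H on K is free, and (K,φ) is isomorphic as a G-system to the rotation system on H induced by the compactification map t ↦ φ_t). -/
/-! Since `H` is abelian, an element fixing one point `x` fixes every `g • x`, hence, by
transitivity, every point; effectiveness then forces it to be `1`. So each orbit map is a
continuous bijection from the compact group `H` onto the Hausdorff space `K`, i.e. a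
homeomorphism. -/

theorem eq_one_of_smul_eq_self_of_comm {H K : Type*} [CommGroup H] [MulAction H K]
    (htrans : ∀ x y : K, ∃ h : H, h • x = y)
    (heff : ∀ h : H, (∀ x : K, h • x = x) → h = 1) {h : H} {x : K} (hx : h • x = x) :
    h = 1 := by
  refine heff h fun y => ?_
  obtain ⟨g, rfl⟩ := htrans x y
  rw [smul_comm, hx]

theorem isHomeomorph_smul_const_of_free {H K : Type*} [Group H] [TopologicalSpace H]
    [CompactSpace H] [TopologicalSpace K] [T2Space K] [MulAction H K] [ContinuousSMul H K]
    {z : K} (hsurj : ∀ y : K, ∃ h : H, h • z = y) (hfree : ∀ h : H, h • z = z → h = 1) :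
    IsHomeomorph (fun h : H => h • z) := by
  refine isHomeomorph_iff_continuous_bijective.mpr
    ⟨continuous_id.smul continuous_const, fun h₁ h₂ hz => ?_, hsurj⟩
  have hfix : (h₂⁻¹ * h₁) • z = z := by
    rw [mul_smul, inv_smul_eq_iff]
    exact hz
  exact (inv_mul_eq_one.mp (hfree _ hfix)).symm

theorem stmt_13_general {G H K : Type*} [Group G]
    [CommGroup H] [TopologicalSpace H] [CompactSpace H]
    [TopologicalSpace K] [T2Space K]
    [MulAction H K] [ContinuousSMul H K]
    (ι : G →* H)
    (htrans : ∀ x y : K, ∃ h : H, h • x = y)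
    (heff : ∀ h : H, (∀ x : K, h • x = x) → h = 1) :
    (∀ (h : H) (x : K), h • x = x → h = 1) ∧
    ∀ z : K, IsHomeomorph (fun h : H => h • z) ∧
      ∀ (t : G) (h : H), (ι t * h) • z = ι t • (h • z) := by
  have hfree : ∀ (h : H) (x : K), h • x = x → h = 1 := fun _ _ =>
    eq_one_of_smul_eq_self_of_comm htrans heff
  exact ⟨hfree, fun z =>
    ⟨isHomeomorph_smul_const_of_free (htrans z) (fun h => hfree h z), fun _ _ => mul_smul _ _ _⟩⟩

/-- For a minimal system with discrete spectrum over an abelian group, where the enveloping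
group `H` is a compact abelian group acting transitively and effectively on `K` (with the
`G`-action given through `ι : G →* H` with dense range), every orbit map `h ↦ h • z` is a
homeomorphism; in particular the action is free, and `(K,φ)` is isomorphic as a `G`-system
to the rotation on `H`. -/
theorem stmt_13 {G H K : Type*} [Group G] [TopologicalSpace G] [IsTopologicalGroup G]
    [CommGroup H] [TopologicalSpace H] [IsTopologicalGroup H] [CompactSpace H] [T2Space H]
    [TopologicalSpace K] [CompactSpace K] [T2Space K]
    [MulAction H K] [ContinuousSMul H K]
    (ι : G →* H) (hι : Continuous ι) (hdense : DenseRange ι)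
    (hmin : ∀ x : K, Dense (Set.range fun t : G => ι t • x))
    (htrans : ∀ x y : K, ∃ h : H, h • x = y)
    (heff : ∀ h : H, (∀ x : K, h • x = x) → h = 1) :
    (∀ (h : H) (x : K), h • x = x → h = 1) ∧
    ∀ z : K, IsHomeomorph (fun h : H => h • z) ∧
      ∀ (t : G) (h : H), (ι t * h) • z = ι t • (h • z) :=
  stmt_13_general ι htrans heff
end

section
/- Let (K,φ) be a minimal topological dynamical system with discrete spectrum and y ∈ K, and let q : E_u(K,φ) → K, ϑ ↦ ϑ(y), be the orbit map from the uniform enveloping group. Then the following are equivalent: (a) q is injective (equivalently, a homeomorphism and an isomorphism of G-systems onto (K,φ)); (b) whenever (t_i) is a net in G with φ_{t_i}(x) → x for one x ∈ K, then φ_{t_i}(x) → x for every x ∈ K. -/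
/-!
Every element of `H` is a homeomorphism and `H` acts transitively on `K`, so injectivity of
evaluation at `y` transfers to injectivity of evaluation at any other point. On the compact set
`H`, evaluation at a point where it is injective is a homeomorphism onto its image, so
convergence of `φ_{t_i}` at that one point forces `φ_{t_i} → id` in `H`, hence at every point.
Conversely, an element `σ ∈ H` fixing `y` is the limit of some net `φ_{t_i}`; this net converges
to the identity at `y`, hence everywhere, so `σ = id`.
-/

open Filter Set Topology

section Evaluation

variable {X Y : Type*} [TopologicalSpace X] [TopologicalSpace Y]

theorem surjOn_eval_of_isCompact_of_denseRange {ι : Type*} {H : Set C(X, Y)} [T2Space Y]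
    (hH : IsCompact H) {f : ι → C(X, Y)} (hfH : range f ⊆ H) (x : X)
    (hdense : Dense (range fun i => f i x)) : SurjOn (fun ϑ : C(X, Y) => ϑ x) H univ := by
  have hclosed : IsClosed ((fun ϑ : C(X, Y) => ϑ x) '' H) :=
    (hH.image (continuous_eval_const x)).isClosed
  have hrange : (range fun i => f i x) ⊆ (fun ϑ : C(X, Y) => ϑ x) '' H := by
    rintro _ ⟨i, rfl⟩
    exact ⟨f i, hfH ⟨i, rfl⟩, rfl⟩
  rw [SurjOn, ← hdense.closure_eq]
  exact closure_minimal hrange hclosed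

theorem tendsto_nhds_of_tendsto_eval_of_injOn {ι : Type*} [T2Space Y] {H : Set C(X, Y)}
    (hH : IsCompact H) {x : X} (hinj : InjOn (fun ϑ : C(X, Y) => ϑ x) H) {ϑ₀ : C(X, Y)}
    (hϑ₀ : ϑ₀ ∈ H) {f : ι → C(X, Y)} {F : Filter ι} (hfH : ∀ᶠ i in F, f i ∈ H)
    (hfx : Tendsto (fun i => f i x) F (𝓝 (ϑ₀ x))) : Tendsto f F (𝓝 ϑ₀) := by
  refine hH.tendsto_nhds_of_unique_mapClusterPt hfH fun ϑ hϑ hcluster => hinj hϑ hϑ₀ ?_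
  have : MapClusterPt (ϑ x) F fun i => f i x :=
    hcluster.continuousAt_comp (continuous_eval_const x).continuousAt
  exact eq_of_nhds_neBot (this.clusterPt.mono hfx)

theorem exists_neBot_tendsto_of_mem_closure_range {ι : Type*} {f : ι → X} {x : X}
    (hx : x ∈ closure (range f)) : ∃ F : Filter ι, F.NeBot ∧ Tendsto f F (𝓝 x) := by
  refine ⟨comap f (𝓝 x), ?_, tendsto_comap⟩
  rw [← map_neBot_iff f, map_comap]
  exact mem_closure_iff_clusterPt.1 hx

end Evaluation

section Envelope

variable {K : Type*} [TopologicalSpace K]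

theorem comp_mem_closure_range {M : Type*} [Mul M] {φ : M → C(K, K)}
    (hmul : ∀ s t : M, φ (s * t) = (φ s).comp (φ t)) {ϑ ρ : C(K, K)}
    (hϑ : ϑ ∈ closure (range φ)) (hρ : ρ ∈ closure (range φ)) :
    ϑ.comp ρ ∈ closure (range φ) :=
  map_mem_closure₂' ContinuousMap.continuous_postcomp ContinuousMap.continuous_precomp hϑ hρ
    (by rintro _ ⟨s, rfl⟩ _ ⟨t, rfl⟩; exact ⟨s * t, hmul s t⟩)

theorem injOn_eval_apply_of_injOn_eval {H : Set C(K, K)}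
    (hcomp : ∀ ϑ ∈ H, ∀ ρ ∈ H, ϑ.comp ρ ∈ H) {y : K}
    (hinj : InjOn (fun ϑ : C(K, K) => ϑ y) H) {ρ ρ' : C(K, K)} (hρ : ρ ∈ H)
    (hρρ' : ρ.comp ρ' = ContinuousMap.id K) : InjOn (fun ϑ : C(K, K) => ϑ (ρ y)) H := by
  intro ϑ hϑ ϑ' hϑ' heq
  have hcancel : ϑ.comp ρ = ϑ'.comp ρ := hinj (hcomp ϑ hϑ ρ hρ) (hcomp ϑ' hϑ' ρ hρ) heq
  calc ϑ = (ϑ.comp ρ).comp ρ' := by rw [ContinuousMap.comp_assoc, hρρ', ContinuousMap.comp_id]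
    _ = (ϑ'.comp ρ).comp ρ' := by rw [hcancel]
    _ = ϑ' := by rw [ContinuousMap.comp_assoc, hρρ', ContinuousMap.comp_id]

theorem injOn_eval_of_forall_fixes_eq_id {H : Set C(K, K)}
    (hcomp : ∀ ϑ ∈ H, ∀ ρ ∈ H, ϑ.comp ρ ∈ H)
    (hinv : ∀ ϑ ∈ H, ∃ ρ ∈ H, ϑ.comp ρ = ContinuousMap.id K ∧ ρ.comp ϑ = ContinuousMap.id K)
    {y : K} (hfix : ∀ σ ∈ H, σ y = y → σ = ContinuousMap.id K) :
    InjOn (fun ϑ : C(K, K) => ϑ y) H := by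
  intro ϑ hϑ ρ hρ heq
  obtain ⟨ρ', hρ', hρρ', hρ'ρ⟩ := hinv ρ hρ
  have hσ : ρ'.comp ϑ = ContinuousMap.id K := by
    refine hfix _ (hcomp ρ' hρ' ϑ hϑ) ?_
    change ρ' (ϑ y) = y
    rw [show ϑ y = ρ y from heq, ← ContinuousMap.comp_apply, hρ'ρ, ContinuousMap.id_apply]
  calc ϑ = ρ.comp (ρ'.comp ϑ) := by rw [← ContinuousMap.comp_assoc, hρρ', ContinuousMap.id_comp]
    _ = ρ := by rw [hσ, ContinuousMap.comp_id]

end Envelope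

theorem stmt_18_general {G K : Type*} [Group G]
    [TopologicalSpace K] [T2Space K]
    (φ : G → C(K, K))
    (h1 : φ 1 = ContinuousMap.id K)
    (hmul : ∀ s t : G, φ (s * t) = (φ s).comp (φ t))
    (hmin : ∀ x : K, Dense (Set.range fun t : G => φ t x))
    (H : Set C(K, K)) (hH : H = closure (Set.range φ))
    (hHcompact : IsCompact H)
    (hHgroup : ∀ ϑ ∈ H, ∃ ρ ∈ H,
      ϑ.comp ρ = ContinuousMap.id K ∧ ρ.comp ϑ = ContinuousMap.id K)
    (y : K) :
    Set.InjOn (fun ϑ : C(K, K) => ϑ y) H ↔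
      ∀ F : Filter G, F.NeBot →
        (∃ x : K, Filter.Tendsto (fun t : G => φ t x) F (nhds x)) →
        ∀ x : K, Filter.Tendsto (fun t : G => φ t x) F (nhds x) := by
  subst hH
  have hcomp : ∀ ϑ ∈ closure (range φ), ∀ ρ ∈ closure (range φ), ϑ.comp ρ ∈ closure (range φ) :=
    fun _ hϑ _ hρ => comp_mem_closure_range hmul hϑ hρ
  have hφ : range φ ⊆ closure (range φ) := subset_closure
  constructor
  · rintro hinj F - ⟨x₀, hx₀⟩ x
    obtain ⟨ρ, hρ, rfl⟩ :=
      surjOn_eval_of_isCompact_of_denseRange hHcompact hφ y (hmin y) (mem_univ x₀)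
    obtain ⟨ρ', -, hρρ', -⟩ := hHgroup ρ hρ
    have hid : ContinuousMap.id K ∈ closure (range φ) := h1 ▸ hφ ⟨1, rfl⟩
    have hφid : Tendsto φ F (𝓝 (ContinuousMap.id K)) :=
      tendsto_nhds_of_tendsto_eval_of_injOn hHcompact
        (injOn_eval_apply_of_injOn_eval hcomp hinj hρ hρρ') hid
        (Eventually.of_forall fun t => hφ ⟨t, rfl⟩) hx₀
    exact ((continuous_eval_const x).tendsto _).comp hφid
  · refine fun hnet => injOn_eval_of_forall_fixes_eq_id hcomp hHgroup fun σ hσ hσy => ?_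
    obtain ⟨F, hF, hφσ⟩ := exists_neBot_tendsto_of_mem_closure_range hσ
    have hφσ_at (x : K) : Tendsto (fun t => φ t x) F (𝓝 (σ x)) :=
      ((continuous_eval_const x).tendsto _).comp hφσ
    ext x
    exact tendsto_nhds_unique (hφσ_at x) (hnet F hF ⟨y, by simpa only [hσy] using hφσ_at y⟩ x)

/-- For a minimal system with discrete spectrum (the uniform enveloping semigroup `H` is a
compact group), the orbit map `ϑ ↦ ϑ(y)` on `H` is injective (equivalently, an isomorphism
of `G`-systems) if and only if every net in `G` whose action converges to the identity at
one point converges to the identity at every point. Nets in `G` are formalized via filters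
on `G`. -/
theorem stmt_18 {G K : Type*} [Group G] [TopologicalSpace G] [IsTopologicalGroup G]
    [TopologicalSpace K] [CompactSpace K] [T2Space K]
    (φ : G → C(K, K))
    (h1 : φ 1 = ContinuousMap.id K)
    (hmul : ∀ s t : G, φ (s * t) = (φ s).comp (φ t))
    (hjoint : Continuous fun p : G × K => φ p.1 p.2)
    (hmin : ∀ x : K, Dense (Set.range fun t : G => φ t x))
    (H : Set C(K, K)) (hH : H = closure (Set.range φ))
    (hHcompact : IsCompact H)
    (hHgroup : ∀ ϑ ∈ H, ∃ ρ ∈ H,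
      ϑ.comp ρ = ContinuousMap.id K ∧ ρ.comp ϑ = ContinuousMap.id K)
    (y : K) :
    Set.InjOn (fun ϑ : C(K, K) => ϑ y) H ↔
      ∀ F : Filter G, F.NeBot →
        (∃ x : K, Filter.Tendsto (fun t : G => φ t x) F (nhds x)) →
        ∀ x : K, Filter.Tendsto (fun t : G => φ t x) F (nhds x) :=
  stmt_18_general φ h1 hmul hmin H hH hHcompact hHgroup y
end
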